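/- arXiv:2303.08218 — 2 statements merged into one kernel-verified Lean document; each statement's English description precedes it below -/
import Mathlib

section
/- Under the same assumptions (Z_1 ⊥ Z_2, full ignorability, positivity, consistency), the interference effect ι_1(π) for π = P(Z_1 = 1), defined as ι_1(π) = E[π(Y_1(1,1)-Y_1(1,0)) + (1-π)(Y_1(0,1)-Y_1(0,0))], is identified by ι_1(π) = E[Y_1 | Z_2 = 1] - E[Y_1 | Z_2 = 0]. -/
/-!
Ignorability makes each potential outcome `Y a b` independent of the event `{Z1 = a, Z2 = b}`,
so `E[Y₁ | Z2 = b] = ∑ a, P(Z1 = a | Z2 = b) E[Y a b]`, and independence of the two treatments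
turns `P(Z1 = a | Z2 = b)` into `P(Z1 = a)`. For binary `Z1` the difference of the two arm means
is then `ι₁(π)` by linearity of the expectation.
-/

open MeasureTheory ProbabilityTheory

namespace ProbabilityTheory

lemma IndepFun.setIntegral_preimage_eq_mul {Ω γ : Type*} [MeasurableSpace Ω] [MeasurableSpace γ]
    {μ : Measure Ω} {X : Ω → γ} {W : Ω → ℝ} (hXW : IndepFun X W μ) (hX : Measurable X)
    (hW : AEStronglyMeasurable W μ) {s : Set γ} (hs : MeasurableSet s) :
    ∫ ω in X ⁻¹' s, W ω ∂μ = μ.real (X ⁻¹' s) * ∫ ω, W ω ∂μ :=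
  Indep.setIntegral_eq_mul (f := id) hX.comap_le ((IndepFun_iff_Indep _ _ _).1 hXW)
    hW.aemeasurable ⟨s, hs, rfl⟩ aestronglyMeasurable_id

end ProbabilityTheory

section PotentialOutcomes

variable {Ω α β : Type*} [MeasurableSpace Ω] [MeasurableSpace α] [MeasurableSpace β]
  [MeasurableSingletonClass α] [MeasurableSingletonClass β]
  {μ : Measure Ω} {Y : α → β → Ω → ℝ} {Z1 : Ω → α} {Z2 : Ω → β}

lemma setIntegral_potentialOutcome_eq_measureReal_mul_integral
    (hZ1 : Measurable Z1) (hZ2 : Measurable Z2)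
    (hign : IndepFun (fun ω => (Z1 ω, Z2 ω)) (fun ω => fun p : α × β => Y p.1 p.2 ω) μ)
    {a : α} {b : β} (hY : AEStronglyMeasurable (Y a b) μ) :
    ∫ ω in {ω | Z1 ω = a ∧ Z2 ω = b}, Y a b ω ∂μ
      = μ.real {ω | Z1 ω = a ∧ Z2 ω = b} * ∫ ω, Y a b ω ∂μ := by
  have hevent : {ω | Z1 ω = a ∧ Z2 ω = b} = (fun ω => (Z1 ω, Z2 ω)) ⁻¹' {(a, b)} := by
    ext ω; simp [Prod.ext_iff]
  rw [hevent]
  exact (hign.comp measurable_id (measurable_pi_apply (a, b))).setIntegral_preimage_eq_mul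
    (hZ1.prodMk hZ2) hY (measurableSet_singleton _)

lemma setIntegral_observedOutcome_eq_sum [Fintype α]
    (hZ1 : Measurable Z1) (hZ2 : Measurable Z2)
    (hign : IndepFun (fun ω => (Z1 ω, Z2 ω)) (fun ω => fun p : α × β => Y p.1 p.2 ω) μ)
    {b : β} (hY : ∀ a, Integrable (Y a b) μ) :
    ∫ ω in {ω | Z2 ω = b}, Y (Z1 ω) (Z2 ω) ω ∂μ
      = ∑ a, μ.real {ω | Z1 ω = a ∧ Z2 ω = b} * ∫ ω, Y a b ω ∂μ := by
  have hmeas : ∀ a, MeasurableSet {ω | Z1 ω = a ∧ Z2 ω = b} := fun a =>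
    (hZ1 (measurableSet_singleton a)).inter (hZ2 (measurableSet_singleton b))
  have hobs : ∀ a, Set.EqOn (fun ω => Y (Z1 ω) (Z2 ω) ω) (Y a b) {ω | Z1 ω = a ∧ Z2 ω = b} := by
    rintro a ω ⟨rfl, rfl⟩
    rfl
  have hunion : {ω | Z2 ω = b} = ⋃ a, {ω | Z1 ω = a ∧ Z2 ω = b} := by
    ext ω; simp
  have hdisj : Pairwise (Function.onFun Disjoint fun a => {ω | Z1 ω = a ∧ Z2 ω = b}) := by
    intro a a' haa'
    exact Set.disjoint_left.2 fun ω hω hω' => haa' (hω.1.symm.trans hω'.1)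
  rw [hunion, integral_iUnion_fintype hmeas hdisj
    fun a => (hY a).integrableOn.congr_fun (hobs a).symm (hmeas a)]
  refine Finset.sum_congr rfl fun a _ => ?_
  rw [setIntegral_congr_fun (hmeas a) (hobs a),
    setIntegral_potentialOutcome_eq_measureReal_mul_integral hZ1 hZ2 hign (hY a).1]

lemma integral_cond_observedOutcome_eq_sum [Fintype α] [IsFiniteMeasure μ]
    (hZ1 : Measurable Z1) (hZ2 : Measurable Z2) (hZindep : IndepFun Z1 Z2 μ)
    (hign : IndepFun (fun ω => (Z1 ω, Z2 ω)) (fun ω => fun p : α × β => Y p.1 p.2 ω) μ)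
    {b : β} (hb : μ {ω | Z2 ω = b} ≠ 0) (hY : ∀ a, Integrable (Y a b) μ) :
    ∫ ω, Y (Z1 ω) (Z2 ω) ω ∂(μ[|{ω | Z2 ω = b}])
      = ∑ a, μ.real {ω | Z1 ω = a} * ∫ ω, Y a b ω ∂μ := by
  have hprod : ∀ a, μ.real {ω | Z1 ω = a ∧ Z2 ω = b}
      = μ.real {ω | Z1 ω = a} * μ.real {ω | Z2 ω = b} := fun a => by
    simp only [measureReal_def, ← ENNReal.toReal_mul]
    exact congrArg ENNReal.toReal (hZindep.measure_inter_preimage_eq_mul {a} {b}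
      (measurableSet_singleton a) (measurableSet_singleton b))
  have hb' : μ.real {ω | Z2 ω = b} ≠ 0 := (measureReal_ne_zero_iff (measure_ne_top _ _)).2 hb
  rw [ProbabilityTheory.cond, integral_smul_measure, ENNReal.toReal_inv, ← measureReal_def,
    setIntegral_observedOutcome_eq_sum hZ1 hZ2 hign hY, smul_eq_mul, Finset.mul_sum]
  refine Finset.sum_congr rfl fun a _ => ?_
  rw [hprod a]
  field_simp

end PotentialOutcomes

theorem interference_effect_identification_no_confounding_general
    {Ω : Type*} [MeasurableSpace Ω] (μ : Measure Ω) [IsProbabilityMeasure μ]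
    (Y : Bool → Bool → Ω → ℝ) (Z1 Z2 : Ω → Bool)
    (hYint : ∀ a b, Integrable (Y a b) μ)
    (hZ1 : Measurable Z1) (hZ2 : Measurable Z2)
    (hZindep : IndepFun Z1 Z2 μ)
    (hign : IndepFun (fun ω => (Z1 ω, Z2 ω))
      (fun ω => fun p : Bool × Bool => Y p.1 p.2 ω) μ)
    (hpos : ∀ z z' : Bool, 0 < μ {ω | Z1 ω = z ∧ Z2 ω = z'})
    (Yobs : Ω → ℝ) (hcons : ∀ ω, Yobs ω = Y (Z1 ω) (Z2 ω) ω)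
    (π : ℝ) (hπ : π = (μ {ω | Z1 ω = true}).toReal) :
    ∫ ω, (π * (Y true true ω - Y true false ω)
        + (1 - π) * (Y false true ω - Y false false ω)) ∂μ
      = (∫ ω, Yobs ω ∂(μ[|{ω | Z2 ω = true}]))
        - ∫ ω, Yobs ω ∂(μ[|{ω | Z2 ω = false}]) := by
  obtain rfl : Yobs = fun ω => Y (Z1 ω) (Z2 ω) ω := funext hcons
  have harm_pos : ∀ b, μ {ω | Z2 ω = b} ≠ 0 := fun b =>
    ((hpos true b).trans_le (measure_mono fun _ hω => hω.2)).ne'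
  replace hπ : π = μ.real {ω | Z1 ω = true} := hπ
  have hπ_false : μ.real {ω | Z1 ω = false} = 1 - π := by
    have htrue : MeasurableSet {ω | Z1 ω = true} := hZ1 (measurableSet_singleton true)
    rw [hπ, ← probReal_compl_eq_one_sub htrue]
    congr 1
    ext ω
    simp
  rw [integral_cond_observedOutcome_eq_sum hZ1 hZ2 hZindep hign (harm_pos true) (hYint · true),
    integral_cond_observedOutcome_eq_sum hZ1 hZ2 hZindep hign (harm_pos false) (hYint · false),
    Fintype.sum_bool, Fintype.sum_bool, hπ_false, ← hπ,
    integral_add (by fun_prop) (by fun_prop),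
    integral_const_mul, integral_const_mul, integral_sub (hYint _ _) (hYint _ _),
    integral_sub (hYint _ _) (hYint _ _)]
  ring

/-- Under Z₁ ⊥ Z₂, full ignorability, positivity and consistency,
the interference effect ι₁(π) for π = P(Z₁ = 1), defined as
ι₁(π) = E[π(Y₁(1,1)-Y₁(1,0)) + (1-π)(Y₁(0,1)-Y₁(0,0))], is identified by
ι₁(π) = E[Y₁ | Z₂ = 1] - E[Y₁ | Z₂ = 0]. -/
theorem interference_effect_identification_no_confounding
    {Ω : Type*} [MeasurableSpace Ω] (μ : Measure Ω) [IsProbabilityMeasure μ]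
    (Y : Bool → Bool → Ω → ℝ) (Z1 Z2 : Ω → Bool)
    (hYmeas : ∀ a b, Measurable (Y a b))
    (hYint : ∀ a b, Integrable (Y a b) μ)
    (hZ1 : Measurable Z1) (hZ2 : Measurable Z2)
    (hZindep : IndepFun Z1 Z2 μ)
    (hign : IndepFun (fun ω => (Z1 ω, Z2 ω))
      (fun ω => fun p : Bool × Bool => Y p.1 p.2 ω) μ)
    (hpos : ∀ z z' : Bool, 0 < μ {ω | Z1 ω = z ∧ Z2 ω = z'})
    (Yobs : Ω → ℝ) (hcons : ∀ ω, Yobs ω = Y (Z1 ω) (Z2 ω) ω)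
    (π : ℝ) (hπ : π = (μ {ω | Z1 ω = true}).toReal) :
    ∫ ω, (π * (Y true true ω - Y true false ω)
        + (1 - π) * (Y false true ω - Y false false ω)) ∂μ
      = (∫ ω, Yobs ω ∂(μ[|{ω | Z2 ω = true}]))
        - ∫ ω, Yobs ω ∂(μ[|{ω | Z2 ω = false}]) :=
  interference_effect_identification_no_confounding_general μ Y Z1 Z2 hYint hZ1 hZ2 hZindep hign
    hpos Yobs hcons π hπ
end

section
/- Assume (i) conditional ignorability: (Z_1, Z_2) ⊥ Y_1(z_1, z_2) | U_1 for all z_1, z_2; (ii) conditional treatment independence: Z_1 ⊥ Z_2 | U_1; (iii) positivity: P(Z_1 = z_1, Z_2 = z_2 | U_1) > 0 almost surely; (iv) consistency Y_1 = Y_1(Z_1, Z_2). Define π(u) = P(Z_2 = 1 | U_1 = u) and the conditional local effect λ_1(π(u); u) = π(u)·E[Y_1(1,1) - Y_1(0,1) | U_1 = u] + (1-π(u))·E[Y_1(1,0) - Y_1(0,0) | U_1 = u]. Then E_{U_1}[λ_1(π(U_1); U_1)] = E_{U_1}[ E(Y_1 | Z_1 = 1, U_1) - E(Y_1 | Z_1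 = 0, U_1) ]. -/
/-!
Fix a stratum `U₁ = u` of positive mass and let `ν` be `μ` conditioned on it. By consistency,
`E_ν[Y₁; Z₁ = z]` splits over the values `c` of `Z₂` into `E_ν[Y₁(z, c); Z₁ = z, Z₂ = c]`.
Ignorability factors each piece as `ν(Z₁ = z, Z₂ = c) E_ν[Y₁(z, c)]`, and `Z₁ ⊥ Z₂` turns the
weight into `ν(Z₁ = z) ν(Z₂ = c)`. Dividing by `ν(Z₁ = z) > 0` gives the adjustment formula
`E[Y₁ | Z₁ = z, U₁ = u] = Σ_c ν(Z₂ = c) E_ν[Y₁(z, c)]`, whose difference between `z = 1` and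
`z = 0` is `λ₁(π(u); u)`. Strata of mass zero contribute nothing to either side.
-/

open MeasureTheory ProbabilityTheory

section

variable {Ω β γ E : Type*} [MeasurableSpace Ω] {μ : Measure Ω}

theorem ProbabilityTheory.IndepFun.setIntegral_preimage_eq_mul_s3 [MeasurableSpace β]
    {W : Ω → β} {X : Ω → ℝ} (h : IndepFun W X μ) (hW : Measurable W) (hX : AEMeasurable X μ)
    {t : Set β} (ht : MeasurableSet t) :
    ∫ ω in W ⁻¹' t, X ω ∂μ = μ.real (W ⁻¹' t) * ∫ ω, X ω ∂μ :=
  Indep.setIntegral_eq_mul (f := id) hW.comap_le h hX ⟨t, ht, rfl⟩ aestronglyMeasurable_id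

section NormedSpace

variable [NormedAddCommGroup E]

theorem MeasureTheory.Integrable.cond {f : Ω → E} (hf : Integrable f μ) {s : Set Ω}
    (hs : μ s ≠ 0) : Integrable f μ[|s] :=
  hf.restrict.smul_measure (ENNReal.inv_ne_top.2 hs)

variable [NormedSpace ℝ E]

theorem ProbabilityTheory.integral_cond_eq_inv_smul_setIntegral (s : Set Ω) (f : Ω → E) :
    ∫ ω, f ω ∂μ[|s] = (μ.real s)⁻¹ • ∫ ω in s, f ω ∂μ := by
  rw [cond, integral_smul_measure, measureReal_def, ENNReal.toReal_inv]

theorem MeasureTheory.setIntegral_eq_sum_setIntegral_inter_preimage [Fintype β]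
    [MeasurableSpace β] [MeasurableSingletonClass β] {W : Ω → β} (hW : Measurable W)
    {s : Set Ω} (hs : MeasurableSet s) {f : Ω → E}
    (hf : ∀ b, IntegrableOn f (s ∩ W ⁻¹' {b}) μ) :
    ∫ ω in s, f ω ∂μ = ∑ b, ∫ ω in s ∩ W ⁻¹' {b}, f ω ∂μ := by
  rw [← integral_iUnion_fintype (fun b => hs.inter (hW (measurableSet_singleton b))) _ hf,
    ← Set.inter_iUnion, ← Set.preimage_iUnion, Set.iUnion_of_singleton, Set.preimage_univ,
    Set.inter_univ]
  exact fun b b' hbb' =>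
    (((Set.disjoint_singleton.2 hbb').preimage W).inter_left' s).inter_right' s

end NormedSpace

theorem ProbabilityTheory.integral_cond_eq_sum_of_indepFun [IsFiniteMeasure μ]
    [Fintype γ] [MeasurableSpace β] [MeasurableSingletonClass β] [MeasurableSpace γ]
    [MeasurableSingletonClass γ] {Z₁ : Ω → β} {Z₂ : Ω → γ} {Y : β → γ → Ω → ℝ} {Yobs : Ω → ℝ}
    (hZ₁ : Measurable Z₁) (hZ₂ : Measurable Z₂) (hcons : ∀ ω, Yobs ω = Y (Z₁ ω) (Z₂ ω) ω)
    (z : β) (hY : ∀ c, Integrable (Y z c) μ)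
    (hign : ∀ c, IndepFun (fun ω => (Z₁ ω, Z₂ ω)) (Y z c) μ) (hZ : IndepFun Z₁ Z₂ μ)
    (hpos : μ (Z₁ ⁻¹' {z}) ≠ 0) :
    ∫ ω, Yobs ω ∂μ[|Z₁ ⁻¹' {z}] = ∑ c, μ.real (Z₂ ⁻¹' {c}) * ∫ ω, Y z c ω ∂μ := by
  have hfiber_meas (c : γ) : MeasurableSet (Z₁ ⁻¹' {z} ∩ Z₂ ⁻¹' {c}) :=
    hZ₁ (measurableSet_singleton z) |>.inter (hZ₂ (measurableSet_singleton c))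
  have hconsOn (c : γ) : Set.EqOn (Y z c) Yobs (Z₁ ⁻¹' {z} ∩ Z₂ ⁻¹' {c}) := by
    rintro ω ⟨rfl, rfl⟩
    exact (hcons ω).symm
  have hfiber (c : γ) : ∫ ω in Z₁ ⁻¹' {z} ∩ Z₂ ⁻¹' {c}, Yobs ω ∂μ
      = μ.real (Z₁ ⁻¹' {z}) * (μ.real (Z₂ ⁻¹' {c}) * ∫ ω, Y z c ω ∂μ) := by
    have hpair : Z₁ ⁻¹' {z} ∩ Z₂ ⁻¹' {c} = (fun ω => (Z₁ ω, Z₂ ω)) ⁻¹' {(z, c)} := by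
      ext; simp
    rw [← setIntegral_congr_fun (hfiber_meas c) (hconsOn c), hpair,
      (hign c).setIntegral_preimage_eq_mul_s3 (hZ₁.prodMk hZ₂) (hY c).aemeasurable
        (measurableSet_singleton _), ← hpair, ← mul_assoc]
    simp only [measureReal_def, ENNReal.toReal_mul, hZ.measure_inter_preimage_eq_mul _ _
      (measurableSet_singleton z) (measurableSet_singleton c)]
  rw [integral_cond_eq_inv_smul_setIntegral, smul_eq_mul,
    setIntegral_eq_sum_setIntegral_inter_preimage hZ₂ (hZ₁ (measurableSet_singleton z))
      fun c => (hY c).integrableOn.congr_fun (hconsOn c) (hfiber_meas c)]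
  simp_rw [hfiber, ← Finset.mul_sum]
  exact inv_mul_cancel_left₀ ((measureReal_ne_zero_iff).2 hpos) _

end

theorem conditional_local_effect_identification_general
    {Ω : Type*} [MeasurableSpace Ω] (μ : Measure Ω) [IsProbabilityMeasure μ]
    {α : Type*} [Fintype α] [MeasurableSpace α] [MeasurableSingletonClass α]
    (Y : Bool → Bool → Ω → ℝ) (Z1 Z2 : Ω → Bool) (U1 : Ω → α)
    (hYint : ∀ a b, Integrable (Y a b) μ)
    (hZ1 : Measurable Z1) (hZ2 : Measurable Z2) (hU1 : Measurable U1)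
    -- (i) conditional ignorability: (Z₁, Z₂) ⊥ Y₁(z₁,z₂) | U₁
    (hign : ∀ u : α, 0 < μ {ω | U1 ω = u} →
      IndepFun (fun ω => (Z1 ω, Z2 ω))
        (fun ω => fun p : Bool × Bool => Y p.1 p.2 ω) (μ[|{ω | U1 ω = u}]))
    -- (ii) conditional treatment independence: Z₁ ⊥ Z₂ | U₁
    (hZindep : ∀ u : α, 0 < μ {ω | U1 ω = u} →
      IndepFun Z1 Z2 (μ[|{ω | U1 ω = u}]))
    -- (iii) positivity
    (hpos : ∀ u : α, 0 < μ {ω | U1 ω = u} → ∀ z1 z2 : Bool,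
      0 < (μ[|{ω | U1 ω = u}]) {ω | Z1 ω = z1 ∧ Z2 ω = z2})
    -- (iv) consistency
    (Yobs : Ω → ℝ) (hcons : ∀ ω, Yobs ω = Y (Z1 ω) (Z2 ω) ω) :
    ∑ u : α, (μ {ω | U1 ω = u}).toReal *
      (((μ[|{ω | U1 ω = u}]) {ω | Z2 ω = true}).toReal
          * ∫ ω, (Y true true ω - Y false true ω) ∂(μ[|{ω | U1 ω = u}])
        + (1 - ((μ[|{ω | U1 ω = u}]) {ω | Z2 ω = true}).toReal)
          * ∫ ω, (Y true false ω - Y false false ω) ∂(μ[|{ω | U1 ω = u}]))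
    = ∑ u : α, (μ {ω | U1 ω = u}).toReal *
        ((∫ ω, Yobs ω ∂(μ[|{ω | Z1 ω = true ∧ U1 ω = u}]))
          - ∫ ω, Yobs ω ∂(μ[|{ω | Z1 ω = false ∧ U1 ω = u}])) := by
  refine Finset.sum_congr rfl fun u _ => ?_
  rcases (zero_le : 0 ≤ μ {ω | U1 ω = u}).eq_or_lt with h0 | hu
  · simp [← h0]
  set ν := μ[|{ω | U1 ω = u}]
  have : IsProbabilityMeasure ν := cond_isProbabilityMeasure hu.ne'
  have hY (a b : Bool) : Integrable (Y a b) ν := (hYint a b).cond hu.ne'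
  have hcond (z : Bool) : μ[|{ω | Z1 ω = z ∧ U1 ω = u}] = ν[|{ω | Z1 ω = z}] := by
    rw [Set.ofPred_and, Set.inter_comm]
    exact (cond_cond_eq_cond_inter (hU1 (measurableSet_singleton u))
      (hZ1 (measurableSet_singleton z)) μ).symm
  have hadj (z : Bool) : ∫ ω, Yobs ω ∂ν[|{ω | Z1 ω = z}]
      = ∑ c, (ν {ω | Z2 ω = c}).toReal * ∫ ω, Y z c ω ∂ν :=
    integral_cond_eq_sum_of_indepFun hZ1 hZ2 hcons z (hY z)
      (fun c => (hign u hu).comp measurable_id (measurable_pi_apply (z, c))) (hZindep u hu)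
      ((hpos u hu z true).trans_le (measure_mono fun _ h => h.1)).ne'
  have hfalse : (ν {ω | Z2 ω = false}).toReal = 1 - (ν {ω | Z2 ω = true}).toReal := by
    have hcompl : {ω | Z2 ω = false} = {ω | Z2 ω = true}ᶜ := by ext; simp
    rw [hcompl]
    exact probReal_compl_eq_one_sub (hZ2 (measurableSet_singleton true))
  rw [hcond, hcond, hadj, hadj, Fintype.sum_bool, Fintype.sum_bool, hfalse,
    integral_sub (hY true true) (hY false true), integral_sub (hY true false) (hY false false)]
  ring

/-- Under (i) conditional ignorability given U₁, (ii) Z₁ ⊥ Z₂ | U₁,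
(iii) positivity and (iv) consistency, the expected conditional local effect satisfies
E_{U₁}[λ₁(π(U₁); U₁)] = E_{U₁}[E(Y₁ | Z₁ = 1, U₁) - E(Y₁ | Z₁ = 0, U₁)],
where π(u) = P(Z₂ = 1 | U₁ = u) and U₁ takes finitely many values. -/
theorem conditional_local_effect_identification
    {Ω : Type*} [MeasurableSpace Ω] (μ : Measure Ω) [IsProbabilityMeasure μ]
    {α : Type*} [Fintype α] [MeasurableSpace α] [MeasurableSingletonClass α]
    (Y : Bool → Bool → Ω → ℝ) (Z1 Z2 : Ω → Bool) (U1 : Ω → α)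
    (hYmeas : ∀ a b, Measurable (Y a b))
    (hYint : ∀ a b, Integrable (Y a b) μ)
    (hZ1 : Measurable Z1) (hZ2 : Measurable Z2) (hU1 : Measurable U1)
    -- (i) conditional ignorability: (Z₁, Z₂) ⊥ Y₁(z₁,z₂) | U₁
    (hign : ∀ u : α, 0 < μ {ω | U1 ω = u} →
      IndepFun (fun ω => (Z1 ω, Z2 ω))
        (fun ω => fun p : Bool × Bool => Y p.1 p.2 ω) (μ[|{ω | U1 ω = u}]))
    -- (ii) conditional treatment independence: Z₁ ⊥ Z₂ | U₁
    (hZindep : ∀ u : α, 0 < μ {ω | U1 ω = u} →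
      IndepFun Z1 Z2 (μ[|{ω | U1 ω = u}]))
    -- (iii) positivity
    (hpos : ∀ u : α, 0 < μ {ω | U1 ω = u} → ∀ z1 z2 : Bool,
      0 < (μ[|{ω | U1 ω = u}]) {ω | Z1 ω = z1 ∧ Z2 ω = z2})
    -- (iv) consistency
    (Yobs : Ω → ℝ) (hcons : ∀ ω, Yobs ω = Y (Z1 ω) (Z2 ω) ω) :
    ∑ u : α, (μ {ω | U1 ω = u}).toReal *
      (((μ[|{ω | U1 ω = u}]) {ω | Z2 ω = true}).toReal
          * ∫ ω, (Y true true ω - Y false true ω) ∂(μ[|{ω | U1 ω = u}])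
        + (1 - ((μ[|{ω | U1 ω = u}]) {ω | Z2 ω = true}).toReal)
          * ∫ ω, (Y true false ω - Y false false ω) ∂(μ[|{ω | U1 ω = u}]))
    = ∑ u : α, (μ {ω | U1 ω = u}).toReal *
        ((∫ ω, Yobs ω ∂(μ[|{ω | Z1 ω = true ∧ U1 ω = u}]))
          - ∫ ω, Yobs ω ∂(μ[|{ω | Z1 ω = false ∧ U1 ω = u}])) :=
  conditional_local_effect_identification_general μ Y Z1 Z2 U1 hYint hZ1 hZ2 hU1 hign hZindep hpos
    Yobs hcons
end
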